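/- A finite partial order P has a relatively maximum full trunk (a unique maximal full trunk) if and only if the union of all maximum chains of P is a trunk of P; moreover, when it exists, the relatively maximum full trunk equals the union of all maximum chains of P. -/

import Mathlib

variable {P : Type*} [PartialOrder P]

/-- Two elements of a partial order are incomparable if neither is `≤` the other. -/
def Incomp (x y : P) : Prop := x ≠ y ∧ ¬x ≤ y ∧ ¬y ≤ x

/-- A subset `T` of a partial order is a trunk if the incomparability relation is
transitive on `T`. -/
def IsTrunkOn (T : Set P) : Prop :=
  ∀ x y z : P, x ∈ T → y ∈ T → z ∈ T → x ≠ z → Incomp x y → Incomp y z → Incomp x z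

/-- A maximum chain of a finite partial order: a chain of maximum cardinality. -/
def IsMaximumChain (C : Set P) : Prop :=
  IsChain (· ≤ ·) C ∧ ∀ D : Set P, IsChain (· ≤ ·) D → D.ncard ≤ C.ncard

/-- The union of all maximum chains of `P`. -/
def maxChainUnion (P : Type*) [PartialOrder P] : Set P :=
  {x : P | ∃ C : Set P, IsMaximumChain C ∧ x ∈ C}

/-- A full trunk of a finite partial order: a trunk containing at least one
maximum chain. -/
def IsFullTrunk (T : Set P) : Prop :=
  IsTrunkOn T ∧ ∃ C : Set P, IsMaximumChain C ∧ C ⊆ T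

/-- A maximal full trunk: a full trunk not properly contained in another full trunk. -/
def IsMaxFullTrunk (T : Set P) : Prop :=
  IsFullTrunk T ∧ ∀ T' : Set P, IsFullTrunk T' → T ⊆ T' → T = T'

lemma Incomp.symm' {x y : P} (h : Incomp x y) : Incomp y x :=
  ⟨h.1.symm, h.2.2, h.2.1⟩

lemma chain_isTrunkOn {C : Set P} (hC : IsChain (· ≤ ·) C) : IsTrunkOn C := by
  intro x y z hx hy hz _ hxy _
  exact absurd (hC hx hy hxy.1) (fun h => h.elim hxy.2.1 hxy.2.2)

lemma exists_maximum_chain (P : Type*) [PartialOrder P] [Fintype P] :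
    ∃ C : Set P, IsMaximumChain C := by
  classical
  obtain ⟨C, hCmem, hCmax⟩ := Finset.exists_max_image
    ((Finset.univ : Finset (Set P)).filter (fun C => IsChain (· ≤ ·) C)) Set.ncard
    ⟨∅, Finset.mem_filter.mpr ⟨Finset.mem_univ _, fun x hx => absurd hx (Set.notMem_empty x)⟩⟩
  refine ⟨C, (Finset.mem_filter.mp hCmem).2, fun D hD => hCmax D ?_⟩
  exact Finset.mem_filter.mpr ⟨Finset.mem_univ _, hD⟩

/-- Every element of a full trunk lies on a maximum chain. -/
lemma fullTrunk_subset_union {P : Type*} [PartialOrder P] [Fintype P]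
    {T : Set P} (hT : IsFullTrunk T) : T ⊆ maxChainUnion P := by
  classical
  obtain ⟨htr, C, hCmax, hCT⟩ := hT
  intro x hx
  by_cases hxC : x ∈ C
  · exact ⟨C, hCmax, hxC⟩
  -- at most one element of C is incomparable to x
  have hsub : ({c ∈ C | Incomp x c} : Set P).Subsingleton := by
    intro a ha b hb
    by_contra hab
    have h := htr a x b (hCT ha.1) hx (hCT hb.1) (by
      intro h; exact hab (congrArg id h)) ha.2.symm' hb.2
    exact absurd (hCmax.1 ha.1 hb.1 h.1) (fun h' => h'.elim h.2.1 h.2.2)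
  by_cases hB : ({c ∈ C | Incomp x c} : Set P) = ∅
  · -- then insert x C is a longer chain, contradiction
    exfalso
    have hcomp : ∀ c ∈ C, x ≤ c ∨ c ≤ x := by
      intro c hc
      have hxc : x ≠ c := fun h => hxC (h ▸ hc)
      have : ¬ Incomp x c := fun h => by
        have : c ∈ ({c ∈ C | Incomp x c} : Set P) := ⟨hc, h⟩
        simp [hB] at this
      by_contra hcon
      push_neg at hcon
      exact this ⟨hxc, hcon.1, hcon.2⟩
    have hchain : IsChain (· ≤ ·) (insert x C) := by
      refine hCmax.1.insert ?_
      intro c hc _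
      exact hcomp c hc
    have := hCmax.2 _ hchain
    rw [Set.ncard_insert_of_notMem hxC (Set.toFinite C)] at this
    omega
  · -- exactly one element c0 of C incomparable to x; swap it for x
    obtain ⟨c0, hc0⟩ := Set.nonempty_iff_ne_empty.mpr hB
    have hone : ∀ c ∈ C, c ≠ c0 → (x ≤ c ∨ c ≤ x) := by
      intro c hc hne
      have hxc : x ≠ c := fun h => hxC (h ▸ hc)
      by_contra hcon
      push_neg at hcon
      exact hne (hsub ⟨hc, hxc, hcon.1, hcon.2⟩ hc0)
    have hchain : IsChain (· ≤ ·) (insert x (C \ {c0})) := by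
      refine (hCmax.1.mono Set.diff_subset).insert ?_
      intro c hc _
      exact hone c hc.1 hc.2
    have hxnot : x ∉ C \ {c0} := fun h => hxC h.1
    have hcard : (insert x (C \ {c0})).ncard = C.ncard := by
      rw [Set.ncard_insert_of_notMem hxnot (Set.toFinite _),
        Set.ncard_diff_singleton_of_mem hc0.1]
      have : 0 < C.ncard := Set.ncard_pos (Set.toFinite C) |>.mpr ⟨c0, hc0.1⟩
      omega
    refine ⟨insert x (C \ {c0}), ⟨hchain, fun D hD => ?_⟩, Set.mem_insert _ _⟩
    rw [hcard]
    exact hCmax.2 D hD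

lemma exists_maxFullTrunk_superset {P : Type*} [PartialOrder P] [Fintype P]
    {T : Set P} (hT : IsFullTrunk T) : ∃ T' : Set P, IsMaxFullTrunk T' ∧ T ⊆ T' := by
  classical
  obtain ⟨T', hT'mem, hT'max⟩ := Finset.exists_max_image
    ((Finset.univ : Finset (Set P)).filter (fun S => IsFullTrunk S ∧ T ⊆ S)) Set.ncard
    ⟨T, by simp [hT]⟩
  obtain ⟨hT'ft, hTT'⟩ := (Finset.mem_filter.mp hT'mem).2
  refine ⟨T', ⟨hT'ft, fun S hS hsub => ?_⟩, hTT'⟩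
  have hScard : S.ncard ≤ T'.ncard :=
    hT'max S (Finset.mem_filter.mpr ⟨Finset.mem_univ _, hS, hTT'.trans hsub⟩)
  exact Set.eq_of_subset_of_ncard_le hsub hScard (Set.toFinite S)

lemma maxFullTrunk_eq_union {P : Type*} [PartialOrder P] [Fintype P]
    {T : Set P} (hT : IsMaxFullTrunk T)
    (huniq : ∀ T' : Set P, IsMaxFullTrunk T' → T' = T) : T = maxChainUnion P := by
  apply Set.Subset.antisymm (fullTrunk_subset_union hT.1)
  rintro x ⟨C, hCmax, hxC⟩
  have hCft : IsFullTrunk C := ⟨chain_isTrunkOn hCmax.1, C, hCmax, Set.Subset.rfl⟩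
  obtain ⟨T', hT', hCT'⟩ := exists_maxFullTrunk_superset hCft
  rw [← huniq T' hT']
  exact hCT' hxC

/-- A finite partial order has a relatively maximum full trunk (i.e. a unique maximal
full trunk) if and only if the union of all its maximum chains is a trunk; and when it
exists, the relatively maximum full trunk equals the union of all maximum chains. -/
theorem relatively_maximum_full_trunk_iff_union_of_maximum_chains
    (P : Type*) [PartialOrder P] [Fintype P] :
    ((∃ T : Set P, IsMaxFullTrunk T ∧ ∀ T' : Set P, IsMaxFullTrunk T' → T' = T) ↔
      IsTrunkOn (maxChainUnion P)) ∧
    (∀ T : Set P, IsMaxFullTrunk T → (∀ T' : Set P, IsMaxFullTrunk T' → T' = T) →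
      T = maxChainUnion P) := by
  constructor
  · constructor
    · rintro ⟨T, hT, huniq⟩
      rw [← maxFullTrunk_eq_union hT huniq]
      exact hT.1.1
    · intro hU
      obtain ⟨C, hCmax⟩ := exists_maximum_chain P
      have hCU : C ⊆ maxChainUnion P := fun c hc => ⟨C, hCmax, hc⟩
      have hUft : IsFullTrunk (maxChainUnion P) := ⟨hU, C, hCmax, hCU⟩
      have hUmax : IsMaxFullTrunk (maxChainUnion P) :=
        ⟨hUft, fun S hS hsub => Set.Subset.antisymm hsub (fullTrunk_subset_union hS)⟩
      refine ⟨maxChainUnion P, hUmax, fun T' hT' => ?_⟩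
      exact hT'.2 _ hUft (fullTrunk_subset_union hT'.1)
  · intro T hT huniq
    exact maxFullTrunk_eq_union hT huniq
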